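/- arXiv:2204.08616 — 2 statements merged into one kernel-verified Lean document; each statement's English description precedes it below -/
import Mathlib

section
/- Let F : ℝⁿ → ℝᵐ be continuously differentiable. Then the map x ↦ θ(x) is continuous on ℝⁿ. -/
open scoped RealInnerProductSpace

/-- `φ_g(d) = max_{1 ≤ i ≤ m} ⟨g_i, d⟩ + ‖d‖²/2`. -/
noncomputable def phi {n m : ℕ} (g : Fin m → EuclideanSpace ℝ (Fin n))
    (d : EuclideanSpace ℝ (Fin n)) : ℝ :=
  (⨆ i, ⟪g i, d⟫) + ‖d‖ ^ 2 / 2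

/-- `θ(x) = min_d [max_i ⟨∇F_i(x), d⟩ + ‖d‖²/2]`. -/
noncomputable def theta {n m : ℕ} (F : Fin m → EuclideanSpace ℝ (Fin n) → ℝ)
    (x : EuclideanSpace ℝ (Fin n)) : ℝ :=
  ⨅ d : EuclideanSpace ℝ (Fin n), phi (fun i => gradient (F i) x) d

/-! Near-minimizers of `phi g` lie in the ball of radius `2‖g‖` (sup norm on tuples), on which
`phi g` and `phi g'` differ by at most `2‖g‖ ‖g - g'‖`; hence `g ↦ inf phi g` is locally
Lipschitz, and `θ` is its composition with the continuous gradient map. -/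

open Set

theorem ContDiff.continuous_gradient {F : Type*} [NormedAddCommGroup F] [InnerProductSpace ℝ F]
    [CompleteSpace F] {f : F → ℝ} (hf : ContDiff ℝ 1 f) : Continuous (gradient f) :=
  (InnerProductSpace.toDual ℝ F).symm.continuous.comp (hf.continuous_fderiv one_ne_zero)

/-- `θ` as a function of the gradients. -/
noncomputable def infPhi {n m : ℕ} (g : Fin m → EuclideanSpace ℝ (Fin n)) : ℝ :=
  ⨅ d, phi g d

section Phi

variable {n m : ℕ} (g g' : Fin m → EuclideanSpace ℝ (Fin n)) (d : EuclideanSpace ℝ (Fin n))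

theorem neg_norm_mul_norm_le_iSup_inner : -(‖g‖ * ‖d‖) ≤ ⨆ i, ⟪g i, d⟫ := by
  rcases isEmpty_or_nonempty (Fin m) with _ | ⟨⟨i⟩⟩
  · rw [Real.iSup_of_isEmpty, neg_nonpos]
    positivity
  · calc -(‖g‖ * ‖d‖) ≤ -(‖g i‖ * ‖d‖) := by gcongr; exact norm_le_pi_norm g i
      _ ≤ ⟪g i, d⟫ := neg_le_of_abs_le (abs_real_inner_le_norm _ _)
      _ ≤ ⨆ i, ⟪g i, d⟫ := le_ciSup (f := fun i => ⟪g i, d⟫) (finite_range _).bddAbove i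

theorem iSup_inner_le_iSup_inner_add :
    ⨆ i, ⟪g' i, d⟫ ≤ (⨆ i, ⟪g i, d⟫) + ‖g' - g‖ * ‖d‖ := by
  cases isEmpty_or_nonempty (Fin m)
  · simp only [Real.iSup_of_isEmpty, zero_add]
    positivity
  refine ciSup_le fun i : Fin m => ?_
  calc ⟪g' i, d⟫ = ⟪g i, d⟫ + ⟪g' i - g i, d⟫ := by rw [inner_sub_left]; ring
    _ ≤ (⨆ i, ⟪g i, d⟫) + ‖g' - g‖ * ‖d‖ := by
      gcongr
      · exact le_ciSup (f := fun i => ⟪g i, d⟫) (finite_range _).bddAbove i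
      · calc ⟪g' i - g i, d⟫ ≤ ‖g' i - g i‖ * ‖d‖ := real_inner_le_norm _ _
          _ ≤ ‖g' - g‖ * ‖d‖ := by gcongr; exact norm_le_pi_norm (g' - g) i

theorem phi_zero : phi g 0 = 0 := by
  simp [phi]

theorem norm_mul_sub_le_phi : ‖d‖ * (‖d‖ / 2 - ‖g‖) ≤ phi g d := by
  have := neg_norm_mul_norm_le_iSup_inner g d
  unfold phi
  linarith

theorem bddBelow_range_phi : BddBelow (range (phi g)) := by
  refine ⟨-(‖g‖ ^ 2 / 2), ?_⟩
  rintro _ ⟨d, rfl⟩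
  nlinarith [norm_mul_sub_le_phi g d, sq_nonneg (‖d‖ - ‖g‖)]

theorem phi_le_phi_add : phi g' d ≤ phi g d + ‖g' - g‖ * ‖d‖ := by
  have := iSup_inner_le_iSup_inner_add g g' d
  unfold phi
  linarith

theorem exists_norm_le_phi_le : ∃ d', ‖d'‖ ≤ 2 * ‖g‖ ∧ phi g d' ≤ phi g d := by
  by_cases hd : ‖d‖ ≤ 2 * ‖g‖
  · exact ⟨d, hd, le_rfl⟩
  · refine ⟨0, by simp, ?_⟩
    rw [phi_zero]
    exact (mul_nonneg (norm_nonneg d) (by linarith)).trans (norm_mul_sub_le_phi g d)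

end Phi

section InfPhi

variable {n m : ℕ}

theorem infPhi_le_add (g g' : Fin m → EuclideanSpace ℝ (Fin n)) :
    infPhi g' ≤ infPhi g + 2 * ‖g‖ * ‖g' - g‖ := by
  rw [← sub_le_iff_le_add]
  refine le_ciInf fun d => ?_
  obtain ⟨d', hd', hphi⟩ := exists_norm_le_phi_le g d
  have hθ : infPhi g' ≤ phi g' d' := ciInf_le (bddBelow_range_phi g') d'
  have hshift : ‖g' - g‖ * ‖d'‖ ≤ 2 * ‖g‖ * ‖g' - g‖ := by
    rw [mul_comm]; gcongr
  linarith [phi_le_phi_add g g' d']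

theorem lipschitzOnWith_infPhi (R : NNReal) :
    LipschitzOnWith (2 * R) (infPhi (n := n) (m := m)) (Metric.closedBall 0 R) := by
  refine LipschitzOnWith.of_le_add_mul _ fun g _ g' hg' => ?_
  rw [mem_closedBall_zero_iff] at hg'
  calc infPhi g ≤ infPhi g' + 2 * ‖g'‖ * ‖g - g'‖ := infPhi_le_add g' g
    _ ≤ infPhi g' + ↑(2 * R) * dist g g' := by
      rw [dist_eq_norm]; push_cast; gcongr

theorem continuous_infPhi : Continuous (infPhi (n := n) (m := m)) :=
  LocallyLipschitz.continuous fun g =>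
    ⟨2 * ⟨‖g‖ + 1, by positivity⟩, _,
      Metric.closedBall_mem_nhds_of_mem (mem_ball_zero_iff.2 (lt_add_one _)),
      lipschitzOnWith_infPhi _⟩

end InfPhi

theorem stmt_3_general {n m : ℕ} (F : Fin m → EuclideanSpace ℝ (Fin n) → ℝ)
    (hF : ∀ i, ContDiff ℝ 1 (F i)) :
    Continuous (theta F) :=
  continuous_infPhi.comp (continuous_pi fun i => (hF i).continuous_gradient)

theorem stmt_3 {n m : ℕ} (hm : 0 < m) (F : Fin m → EuclideanSpace ℝ (Fin n) → ℝ)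
    (hF : ∀ i, ContDiff ℝ 1 (F i)) :
    Continuous (theta F) :=
  stmt_3_general F hF
end

section
/- Let F : ℝⁿ → ℝᵐ be continuously differentiable, let L > 0, let x ∈ ℝⁿ, and let α_1,…,α_m ∈ (0, L]. If d_BB is the Barzilai–Borwein descent direction at x for the weights α_1,…,α_m and d(x) is the steepest descent direction at x, then ‖d_BB‖ ≥ (1/L)‖d(x)‖. -/
/-
Along the ray through a minimizer `d` of `φ_g`, `t ↦ φ_g(t d) = t M + t² ‖d‖²/2` with
`M = maxᵢ ⟨gᵢ, d⟩` is minimal at `t = 1`, so `M = -‖d‖²` and `min φ_g = -‖d‖²/2`. Hence any `d'`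
with `⟨gᵢ, d'⟩ ≤ -‖d'‖²` for all `i` has `φ_g(d') ≤ -‖d'‖²/2`, which forces `‖d'‖ ≤ ‖d‖`.
Since `αᵢ⁻¹ ≥ 1/L` and `⟨∇Fᵢ(x), d(x)⟩ ≤ -‖d(x)‖² ≤ 0`, the vector `d(x)/L` is such a `d'` for
the weighted gradients `∇Fᵢ(x)/αᵢ`, whose minimizer is `d_BB`.
-/

open scoped RealInnerProductSpace

section

variable {n m : ℕ}

lemma phi_smul_of_nonneg (g : Fin m → EuclideanSpace ℝ (Fin n)) (d : EuclideanSpace ℝ (Fin n))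
    {t : ℝ} (ht : 0 ≤ t) :
    phi g (t • d) = t * (⨆ i, ⟪g i, d⟫) + t ^ 2 * (‖d‖ ^ 2 / 2) := by
  simp only [phi, real_inner_smul_right, ← Real.mul_iSup_of_nonneg ht, norm_smul, mul_pow,
    Real.norm_of_nonneg ht]
  ring

variable {g : Fin m → EuclideanSpace ℝ (Fin n)} {d : EuclideanSpace ℝ (Fin n)}

lemma iSup_inner_eq_neg_norm_sq_of_isMin (hmin : ∀ d', phi g d ≤ phi g d') :
    (⨆ i, ⟪g i, d⟫) = -‖d‖ ^ 2 := by
  set M := ⨆ i, ⟪g i, d⟫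
  have hloc : IsLocalMin (fun t : ℝ => t * M + t ^ 2 * (‖d‖ ^ 2 / 2)) 1 := by
    filter_upwards [lt_mem_nhds one_pos] with t ht
    have hone := phi_smul_of_nonneg g d zero_le_one
    rw [one_smul] at hone
    simpa only [hone, phi_smul_of_nonneg g d ht.le] using hmin (t • d)
  have hderiv := hloc.hasDerivAt_eq_zero
    ((hasDerivAt_mul_const M).fun_add ((hasDerivAt_pow 2 (1 : ℝ)).mul_const (‖d‖ ^ 2 / 2)))
  norm_num at hderiv
  linarith

lemma inner_le_neg_norm_sq_of_isMin (hmin : ∀ d', phi g d ≤ phi g d') (i : Fin m) :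
    ⟪g i, d⟫ ≤ -‖d‖ ^ 2 :=
  iSup_inner_eq_neg_norm_sq_of_isMin hmin ▸
    le_ciSup (Set.finite_range fun i => ⟪g i, d⟫).bddAbove i

lemma norm_le_of_isMin [NeZero m] (hmin : ∀ d', phi g d ≤ phi g d')
    {d' : EuclideanSpace ℝ (Fin n)} (h : ∀ i, ⟪g i, d'⟫ ≤ -‖d'‖ ^ 2) : ‖d'‖ ≤ ‖d‖ := by
  have hcmp := hmin d'
  rw [phi, phi, iSup_inner_eq_neg_norm_sq_of_isMin hmin] at hcmp
  have hsq : ‖d'‖ ^ 2 ≤ ‖d‖ ^ 2 := by linarith [ciSup_le h]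
  exact pow_le_pow_iff_left₀ (norm_nonneg _) (norm_nonneg _) two_ne_zero |>.mp hsq

end

theorem stmt_14_general {n m : ℕ} (hm : 0 < m) (F : Fin m → EuclideanSpace ℝ (Fin n) → ℝ)
    (L : ℝ) (hL : 0 < L)
    (x : EuclideanSpace ℝ (Fin n))
    (α : Fin m → ℝ) (hα : ∀ i, 0 < α i ∧ α i ≤ L)
    (dBB dx : EuclideanSpace ℝ (Fin n))
    (hdBB : ∀ d' : EuclideanSpace ℝ (Fin n),
      phi (fun i => (α i)⁻¹ • gradient (F i) x) dBB ≤
        phi (fun i => (α i)⁻¹ • gradient (F i) x) d')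
    (hdx : ∀ d' : EuclideanSpace ℝ (Fin n),
      phi (fun i => gradient (F i) x) dx ≤ phi (fun i => gradient (F i) x) d') :
    ‖dBB‖ ≥ (1 / L) * ‖dx‖ := by
  have : NeZero m := ⟨hm.ne'⟩
  have hLinv : 0 ≤ L⁻¹ := inv_nonneg.mpr hL.le
  suffices ‖L⁻¹ • dx‖ ≤ ‖dBB‖ by rwa [norm_smul, Real.norm_of_nonneg hLinv, ← one_div] at this
  refine norm_le_of_isMin hdBB fun i => ?_
  have hinner := inner_le_neg_norm_sq_of_isMin hdx i
  have hweight : L⁻¹ ≤ (α i)⁻¹ := inv_anti₀ (hα i).1 (hα i).2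
  simp only [real_inner_smul_left, real_inner_smul_right, norm_smul, Real.norm_of_nonneg hLinv]
  calc L⁻¹ * ((α i)⁻¹ * ⟪gradient (F i) x, dx⟫)
      ≤ L⁻¹ * (L⁻¹ * ⟪gradient (F i) x, dx⟫) :=
        mul_le_mul_of_nonneg_left (mul_le_mul_of_nonpos_right hweight
          (hinner.trans (by simp))) hLinv
    _ ≤ L⁻¹ * (L⁻¹ * -‖dx‖ ^ 2) := by gcongr
    _ = -(L⁻¹ * ‖dx‖) ^ 2 := by ring

theorem stmt_14 {n m : ℕ} (hm : 0 < m) (F : Fin m → EuclideanSpace ℝ (Fin n) → ℝ)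
    (hF : ∀ i, ContDiff ℝ 1 (F i)) (L : ℝ) (hL : 0 < L)
    (x : EuclideanSpace ℝ (Fin n))
    (α : Fin m → ℝ) (hα : ∀ i, 0 < α i ∧ α i ≤ L)
    (dBB dx : EuclideanSpace ℝ (Fin n))
    (hdBB : ∀ d' : EuclideanSpace ℝ (Fin n),
      phi (fun i => (α i)⁻¹ • gradient (F i) x) dBB ≤
        phi (fun i => (α i)⁻¹ • gradient (F i) x) d')
    (hdx : ∀ d' : EuclideanSpace ℝ (Fin n),
      phi (fun i => gradient (F i) x) dx ≤ phi (fun i => gradient (F i) x) d') :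
    ‖dBB‖ ≥ (1 / L) * ‖dx‖ :=
  stmt_14_general hm F L hL x α hα dBB dx hdBB hdx
end
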